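/- arXiv:2309.04121 — 3 statements merged into one kernel-verified Lean document; each statement's English description precedes it below -/
import Mathlib

section
/- Let A, B, C ∈ F_{q²} with B ≠ 0, and suppose there exists θ ∈ F_{q²} with Tr(A)·θ^q + 2Bθ + C = 0. If Tr(A) = 2B^{(q+1)/2}, then Σ_{w ∈ F_{q²}} χ(A·w^{q+1} + B·w² + C·w) = q·G·χ(−A·θ^{q+1} − B·θ²); and if Tr(A) = −2B^{(q+1)/2}, then Σ_{w ∈ F_{q²}} χ(A·w^{q+1} + B·w² + C·w) = −q·G·χ(−A·θ^{q+1} − B·θ²). -/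
open Finset
open scoped Classical

/-!
Write `σ x = x ^ q` for the Frobenius of `𝔽_{q²}/𝔽_q` and `Tr z = σ z + z`, so that `χ = ψ ∘ Tr`.
Substituting `w = v + θ`, the hypothesis on `θ` makes the argument change by the constant
`-A θ^{q+1} - B θ²` and by an element of trace zero, so the sum factors as
`χ(-A θ^{q+1} - B θ²) · ∑_v χ(A v^{q+1} + B v²)`.

If `Tr A = 2 ε b` with `b = B^{(q+1)/2}` and `ε = ±1`, then `c = -B / (ε b)` has norm `1`, and by
Hilbert 90 there are `u, y ≠ 0` with `σ u = c u` and `σ y = -y`. In the `𝔽_q`-coordinates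
`v = u (t y + s)` the quadratic form `Tr (A v^{q+1} + B v²)` collapses to `d t²` with
`d = 4 B u² y² ∈ 𝔽_q`. Hence the remaining sum is `q · ∑_t ψ(d t²) = q · η(d) · G`, and Euler's
criterion `η(d) = d^{(q-1)/2} = ε` finishes the computation.
-/

section TraceChar

variable {F : Type*} [Field F] [Fintype F] {p : ℕ} [Fact p.Prime] [Algebra (ZMod p) F]
  {M : Type*} [CommMonoid M]

noncomputable def traceChar {ζ : M} (hζ : ζ ^ p = 1) : AddChar F M :=
  (AddChar.zmodChar p hζ).compAddMonoidHom (Algebra.trace (ZMod p) F).toAddMonoidHom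

theorem finrank_zmod_of_card_eq {k : ℕ} (hF : Fintype.card F = p ^ k) :
    Module.finrank (ZMod p) F = k := by
  rw [Module.card_eq_pow_finrank (K := ZMod p), ZMod.card] at hF
  exact Nat.pow_right_injective (Fact.out : p.Prime).two_le hF

theorem algebraMap_trace_zmod_eq_sum_pow {k : ℕ} (hF : Fintype.card F = p ^ k) (x : F) :
    algebraMap (ZMod p) F (Algebra.trace (ZMod p) F x) = ∑ i ∈ range k, x ^ p ^ i := by
  rw [FiniteField.algebraMap_trace_eq_sum_pow, finrank_zmod_of_card_eq hF, Nat.card_zmod]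

theorem exists_natCast_eq_sum_pow {k : ℕ} (hF : Fintype.card F = p ^ k) (x : F) :
    ∃ m : ℕ, (m : F) = ∑ i ∈ range k, x ^ p ^ i :=
  ⟨(Algebra.trace (ZMod p) F x).val, by
    rw [← algebraMap_trace_zmod_eq_sum_pow hF, ← map_natCast (algebraMap (ZMod p) F),
      ZMod.natCast_zmod_val]⟩

theorem traceChar_apply_of_natCast_eq {ζ : M} (hζ : ζ ^ p = 1) {k : ℕ}
    (hF : Fintype.card F = p ^ k) {x : F} {m : ℕ} (hm : (m : F) = ∑ i ∈ range k, x ^ p ^ i) :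
    traceChar hζ x = ζ ^ m := by
  have htr : Algebra.trace (ZMod p) F x = m := by
    apply FaithfulSMul.algebraMap_injective (ZMod p) F
    rw [algebraMap_trace_zmod_eq_sum_pow hF, map_natCast, hm]
  simp only [traceChar, AddChar.compAddMonoidHom_apply, LinearMap.toAddMonoidHom_coe, htr,
    AddChar.zmodChar_apply']

theorem traceChar_isPrimitive {ζ : M} (hζ : IsPrimitiveRoot ζ p) :
    (traceChar (F := F) hζ.pow_eq_one).IsPrimitive := by
  refine AddChar.IsPrimitive.of_ne_one (AddChar.ne_one_iff.2 ?_)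
  obtain ⟨x, hx⟩ : ∃ x, Algebra.trace (ZMod p) F x ≠ 0 := by
    by_contra! h
    exact Algebra.trace_ne_zero (ZMod p) F (LinearMap.ext h)
  exact ⟨x, fun h1 => hx <|
    ((AddChar.zmodChar_primitive_of_primitive_root p hζ).zmod_char_eq_one_iff p _).1 h1⟩

end TraceChar

theorem sum_addChar_mul_sq {F R : Type*} [Field F] [Fintype F] [DecidableEq F] [CommRing R]
    [IsDomain R] (hF : ringChar F ≠ 2) {ψ : AddChar F R} (hψ : ψ.IsPrimitive) {d : F}
    (hd : d ≠ 0) :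
    ∑ x, ψ (d * x ^ 2) =
      quadraticChar F d * gaussSum ((quadraticChar F).ringHomComp (Int.castRingHom R)) ψ := by
  set η := (quadraticChar F).ringHomComp (Int.castRingHom R)
  have hsq : ∀ a, (#{x : F | x ^ 2 = a} : R) = η a + 1 := fun a => by
    simpa [η] using congrArg (Int.cast : ℤ → R) (quadraticChar_card_sqrts hF a)
  calc ∑ x, ψ (d * x ^ 2)
      = ∑ a, ∑ x with x ^ 2 = a, ψ (d * a) := by
        rw [← Finset.sum_fiberwise univ (· ^ 2)]
        exact Fintype.sum_congr _ _ fun a => Finset.sum_congr rfl fun x hx => by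
          rw [(Finset.mem_filter.1 hx).2]
    _ = ∑ a, η a * ψ.mulShift d a + ∑ a, ψ.mulShift d a := by
        simp only [Finset.sum_const, nsmul_eq_mul, hsq, AddChar.mulShift_apply, add_mul,
          one_mul, Finset.sum_add_distrib]
    _ = η d * gaussSum η ψ := by
        rw [AddChar.sum_eq_zero_of_ne_one (hψ hd), add_zero, ← gaussSum,
          ← gaussSum_mulShift η ψ (Units.mk0 d hd), ← mul_assoc, Units.val_mk0, ← map_mul, ← sq]
        simp [η, quadraticChar_sq_one' hd]
    _ = quadraticChar F d * gaussSum η ψ := by simp [η]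

theorem ringChar_ne_two_of_odd_card {F : Type*} [Field F] [Fintype F]
    (h : Odd (Fintype.card F)) : ringChar F ≠ 2 := fun h2 => by
  have := FiniteField.even_card_iff_char_two.1 h2
  rw [Nat.odd_iff] at h
  omega

theorem pow_sub_one_eq_of_pow_eq_mul {K : Type*} [Field K] {q : ℕ} (hq : q ≠ 0) {u c : K}
    (hu : u ≠ 0) (h : u ^ q = c * u) : u ^ (q - 1) = c :=
  mul_right_cancel₀ hu (by rw [← pow_succ, Nat.sub_add_cancel (Nat.one_le_iff_ne_zero.2 hq), h])

theorem pow_sub_one_div_two_eq {K : Type*} [Field K] {q : ℕ} (hq : Odd q) {B c u y ε : K}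
    (hB : B ≠ 0) (hε : ε ^ 2 = 1) (hc : ε * B ^ ((q + 1) / 2) * c = -B) (hu : u ^ (q - 1) = c)
    (hy : y ^ (q - 1) = -1) (h2 : (2 : K) ^ (q - 1) = 1) :
    (4 * B * u ^ 2 * y ^ 2) ^ ((q - 1) / 2) = ε := by
  obtain ⟨k, rfl⟩ := hq
  have hk : (2 * k + 1 + 1) / 2 = k + 1 := by omega
  simp only [Nat.add_sub_cancel, Nat.mul_div_cancel_left k two_pos, hk] at hu hy h2 hc ⊢
  have hBk : ε * B ^ k * c = -1 := mul_right_cancel₀ hB (by linear_combination hc)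
  have h4 : (4 : K) ^ k = 1 := by rw [← h2, pow_mul]; norm_num
  calc (4 * B * u ^ 2 * y ^ 2) ^ k = 4 ^ k * B ^ k * u ^ (2 * k) * y ^ (2 * k) := by ring
    _ = ε := by rw [h4, hu, hy]; linear_combination (-ε) * hBk + B ^ k * c * hε

section Conjugation

variable {K : Type*} [Field K]

def fixedSubfield (σ : K →+* K) : Subfield K := σ.eqLocusField (RingHom.id K)

@[simp]
theorem mem_fixedSubfield {σ : K →+* K} {x : K} : x ∈ fixedSubfield σ ↔ σ x = x := Iff.rfl

theorem map_coe_fixedSubfield {σ : K →+* K} (t : fixedSubfield σ) : σ t = t := t.2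

def conjTrace (σ : K →+* K) (hσ : Function.Involutive σ) : K →+ fixedSubfield σ where
  toFun z := ⟨σ z + z, by simp [hσ z, add_comm]⟩
  map_zero' := by ext; simp
  map_add' x y := by ext; simp only [map_add, Subfield.coe_add]; ring

@[simp]
theorem coe_conjTrace {σ : K →+* K} (hσ : Function.Involutive σ) (z : K) :
    (conjTrace σ hσ z : K) = σ z + z := rfl

variable {σ : K →+* K}

theorem exists_ne_zero_map_eq_neg (hσ : Function.Involutive σ) (hne : σ ≠ RingHom.id K) :
    ∃ y ≠ 0, σ y = -y := by
  obtain ⟨x, hx⟩ := DFunLike.ne_iff.1 hne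
  exact ⟨x - σ x, sub_ne_zero.2 (Ne.symm hx), by rw [map_sub, hσ x, neg_sub]⟩

theorem exists_ne_zero_map_eq_mul (hσ : Function.Involutive σ) (hne : σ ≠ RingHom.id K) {c : K}
    (hc : c * σ c = 1) : ∃ u ≠ 0, σ u = c * u := by
  by_cases hc1 : c = -1
  · obtain ⟨y, hy, hσy⟩ := exists_ne_zero_map_eq_neg hσ hne
    exact ⟨y, hy, by rw [hσy, hc1, neg_one_mul]⟩
  refine ⟨1 + σ c, fun h => hc1 ?_, by rw [map_add, map_one, hσ c]; linear_combination -hc⟩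
  rw [← hσ c, eq_neg_of_add_eq_zero_right h, map_neg, map_one]

theorem bijective_mul_add_of_map_eq_neg (hσ : Function.Involutive σ) (h2 : (2 : K) ≠ 0) {y : K}
    (hy : y ≠ 0) (hσy : σ y = -y) :
    Function.Bijective fun ts : fixedSubfield σ × fixedSubfield σ => (ts.1 : K) * y + ts.2 := by
  constructor
  · rintro ⟨t, s⟩ ⟨t', s'⟩ h
    have hσh := congrArg σ h
    simp only [map_add, map_mul, map_coe_fixedSubfield, hσy] at h hσh
    have ht : (t : K) = t' := mul_right_cancel₀ (mul_ne_zero h2 hy) (by linear_combination h - hσh)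
    have hs : (s : K) = s' := by linear_combination h - y * ht
    rw [Subtype.ext ht, Subtype.ext hs]
  · intro w
    refine ⟨(⟨(w - σ w) / (2 * y), ?_⟩, ⟨(w + σ w) / 2, ?_⟩), ?_⟩
    · rw [mem_fixedSubfield, map_div₀, map_mul, map_sub, hσ w, hσy, map_ofNat]
      field_simp
      ring
    · rw [mem_fixedSubfield, map_div₀, map_add, hσ w, map_ofNat, add_comm]
    · field_simp
      ring

theorem trace_quadratic_eq_mul_sq (hσ : Function.Involutive σ) {A B e c u y t s v : K}
    (hA : σ A + A = 2 * e) (hc : e * c = -B) (hBc : σ B * c ^ 2 = B) (hu : σ u = c * u)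
    (hy : σ y = -y) (ht : σ t = t) (hs : σ s = s) (hv : v = u * (t * y + s)) :
    σ (A * (σ v * v) + B * v ^ 2) + (A * (σ v * v) + B * v ^ 2) =
      4 * B * u ^ 2 * y ^ 2 * t ^ 2 := by
  have hσv : σ v = c * u * (s - t * y) := by
    rw [hv, map_mul, map_add, map_mul, hu, ht, hs, hy]; ring
  rw [map_add, map_mul, map_mul, map_mul, map_pow, hσ v, hσv]
  subst hv
  linear_combination (u ^ 2 * (s + t * y) * (c * (s - t * y))) * hA
    + (2 * u ^ 2 * (s + t * y) * (s - t * y)) * hc + (u ^ 2 * (s - t * y) ^ 2) * hBc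

theorem conjTrace_quadratic_shift (hσ : Function.Involutive σ) {A B C θ v : K}
    (hθ : (σ A + A) * σ θ + 2 * B * θ + C = 0) :
    conjTrace σ hσ (A * (σ (v + θ) * (v + θ)) + B * (v + θ) ^ 2 + C * (v + θ)) =
      conjTrace σ hσ (A * (σ v * v) + B * v ^ 2) +
        conjTrace σ hσ (-A * (σ θ * θ) - B * θ ^ 2) := by
  have hσθ := congrArg σ hθ
  ext
  simp only [coe_conjTrace, Subfield.coe_add]
  simp only [map_add, map_sub, map_mul, map_neg, map_pow, map_ofNat, map_zero, hσ _] at hσθ ⊢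
  linear_combination (v + θ) * hθ + (σ v + σ θ) * hσθ

variable [Fintype K] {R : Type*} [CommSemiring R]

theorem sum_conjTrace_shift (hσ : Function.Involutive σ) (ψ : AddChar (fixedSubfield σ) R)
    {A B C θ : K} (hθ : (σ A + A) * σ θ + 2 * B * θ + C = 0) :
    ∑ w, ψ (conjTrace σ hσ (A * (σ w * w) + B * w ^ 2 + C * w)) =
      ψ (conjTrace σ hσ (-A * (σ θ * θ) - B * θ ^ 2)) *
        ∑ v, ψ (conjTrace σ hσ (A * (σ v * v) + B * v ^ 2)) := by
  rw [← Equiv.sum_comp (Equiv.addRight θ), Finset.mul_sum]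
  refine Fintype.sum_congr _ _ fun v => ?_
  rw [Equiv.coe_addRight, conjTrace_quadratic_shift hσ hθ, AddChar.map_add_eq_mul, mul_comm]

theorem sum_conjTrace_eq_card_mul [Fintype (fixedSubfield σ)] (hσ : Function.Involutive σ)
    (h2 : (2 : K) ≠ 0) (ψ : AddChar (fixedSubfield σ) R) {y : K} (hy : y ≠ 0) (hσy : σ y = -y)
    (f : K → K) (d : fixedSubfield σ)
    (hf : ∀ t s : fixedSubfield σ, σ (f (t * y + s)) + f (t * y + s) = d * t ^ 2) :
    ∑ w, ψ (conjTrace σ hσ (f w)) = Fintype.card (fixedSubfield σ) * ∑ t, ψ (d * t ^ 2) := by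
  rw [← Fintype.sum_bijective _ (bijective_mul_add_of_map_eq_neg hσ h2 hy hσy)
    (fun ts => ψ (d * ts.1 ^ 2)) _ fun ts => congrArg ψ (Subtype.ext (hf ts.1 ts.2).symm),
    Fintype.sum_prod_type]
  simp only [Finset.sum_const, Finset.card_univ, nsmul_eq_mul, Finset.mul_sum]

theorem sum_conjTrace_quadratic_eq_card_mul [Fintype (fixedSubfield σ)]
    (hσ : Function.Involutive σ) (h2 : (2 : K) ≠ 0) (ψ : AddChar (fixedSubfield σ) R)
    {A B e c u y : K} (hA : σ A + A = 2 * e) (hc : e * c = -B) (hBc : σ B * c ^ 2 = B)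
    (hu : u ≠ 0) (hσu : σ u = c * u) (hy : y ≠ 0) (hσy : σ y = -y) :
    ∃ d : fixedSubfield σ, (d : K) = 4 * B * u ^ 2 * y ^ 2 ∧
      ∑ v, ψ (conjTrace σ hσ (A * (σ v * v) + B * v ^ 2)) =
        Fintype.card (fixedSubfield σ) * ∑ t, ψ (d * t ^ 2) := by
  refine ⟨⟨4 * B * u ^ 2 * y ^ 2, ?_⟩, rfl, ?_⟩
  · rw [mem_fixedSubfield]
    simp only [map_mul, map_pow, map_ofNat, hσu, hσy]
    linear_combination 4 * u ^ 2 * y ^ 2 * hBc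
  rw [← Equiv.sum_comp (Equiv.mulLeft₀ u hu)]
  exact sum_conjTrace_eq_card_mul hσ h2 ψ hy hσy _ _ fun t s =>
    trace_quadratic_eq_mul_sq hσ hA hc hBc hσu hσy t.2 s.2 rfl

end Conjugation

section Frobenius

variable {K : Type*} [Field K] [Fintype K] {q : ℕ} {σ : K →+* K}

theorem involutive_of_card_eq_sq (hK : Fintype.card K = q ^ 2) (hσ : ∀ x, σ x = x ^ q) :
    Function.Involutive σ := fun x => by
  rw [hσ, hσ, ← pow_mul, ← sq, ← hK, FiniteField.pow_card]

theorem ne_id_of_card_eq_sq (hK : Fintype.card K = q ^ 2) (hσ : ∀ x, σ x = x ^ q) :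
    σ ≠ RingHom.id K := by
  intro h
  have hq : 1 < q := (Nat.one_lt_pow_iff two_ne_zero).1 (hK ▸ Fintype.one_lt_card)
  have hroots : (univ : Finset K).val ⊆ (Polynomial.X ^ q - Polynomial.X : Polynomial K).roots :=
    fun x _ => by
      rw [Polynomial.mem_roots (FiniteField.X_pow_card_sub_X_ne_zero K hq)]
      simp [← hσ, h]
  have := Polynomial.card_le_degree_of_subset_roots hroots
  rw [FiniteField.X_pow_card_sub_X_natDegree_eq K hq, card_univ, hK] at this
  nlinarith

theorem two_ne_zero_of_card_eq_sq (hq : Odd q) (hK : Fintype.card K = q ^ 2) : (2 : K) ≠ 0 :=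
  Ring.two_ne_zero (ringChar_ne_two_of_odd_card (hK ▸ hq.pow))

theorem card_fixedSubfield [Fintype (fixedSubfield σ)] (hq : Odd q)
    (hK : Fintype.card K = q ^ 2) (hσ : ∀ x, σ x = x ^ q) :
    Fintype.card (fixedSubfield σ) = q := by
  have hinv := involutive_of_card_eq_sq hK hσ
  obtain ⟨y, hy, hσy⟩ := exists_ne_zero_map_eq_neg hinv (ne_id_of_card_eq_sq hK hσ)
  have := Fintype.card_of_bijective
    (bijective_mul_add_of_map_eq_neg hinv (two_ne_zero_of_card_eq_sq hq hK) hy hσy)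
  rw [Fintype.card_prod, hK, sq] at this
  exact Nat.mul_self_inj.1 this

theorem quadraticChar_fixedSubfield_eq [Fintype (fixedSubfield σ)] (hq : Odd q)
    (hK : Fintype.card K = q ^ 2) (hσ : ∀ x, σ x = x ^ q) {d : fixedSubfield σ} (hd : d ≠ 0)
    (ε : ℤˣ) (h : (d : K) ^ ((q - 1) / 2) = ε) : quadraticChar (fixedSubfield σ) d = ε := by
  have hcard := card_fixedSubfield hq hK hσ
  have hF := ringChar_ne_two_of_odd_card (hcard ▸ hq)
  have hd' : d ^ (Fintype.card (fixedSubfield σ) / 2) = ε := by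
    have hq2 : q / 2 = (q - 1) / 2 := by have := Nat.odd_iff.1 hq; omega
    apply Subtype.ext
    rw [hcard, hq2]
    push_cast
    exact h
  rw [quadraticChar_eq_pow_of_char_ne_two hF hd, hd']
  rcases Int.units_eq_one_or ε with rfl | rfl
  · simp
  · simp [Ring.neg_one_ne_one_of_char_ne_two hF]

theorem exists_mul_map_eq_one_of_trace_eq (hq : Odd q) (hK : Fintype.card K = q ^ 2)
    (hσ : ∀ x, σ x = x ^ q) {A B : K} (hB : B ≠ 0) (ε : ℤˣ)
    (hA : σ A + A = 2 * ε * B ^ ((q + 1) / 2)) :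
    ∃ c : K, c * σ c = 1 ∧ ε * B ^ ((q + 1) / 2) * c = -B ∧ σ B * c ^ 2 = B := by
  have hinv := involutive_of_card_eq_sq hK hσ
  have h2 := two_ne_zero_of_card_eq_sq hq hK
  have hε2 : ((ε : ℤ) : K) ^ 2 = 1 := by rcases Int.units_eq_one_or ε with rfl | rfl <;> simp
  have hσB : σ B ≠ 0 := by rw [hσ]; exact pow_ne_zero _ hB
  obtain ⟨e, he⟩ : ∃ e, e = (ε : K) * B ^ ((q + 1) / 2) := ⟨_, rfl⟩
  rw [mul_assoc, ← he] at hA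
  rw [← he]
  have he0 : e ≠ 0 := he ▸ mul_ne_zero (fun h => by simp [h] at hε2) (pow_ne_zero _ hB)
  have hσe : σ e = e := by
    have := congrArg σ hA
    rw [map_add, hinv A, add_comm, hA, map_mul, map_ofNat] at this
    exact (mul_left_cancel₀ h2 this).symm
  have he2 : e ^ 2 = B * σ B := by
    obtain ⟨k, rfl⟩ := hq
    rw [he, hσ, mul_pow, hε2, one_mul, ← pow_mul,
      show (2 * k + 1 + 1) / 2 * 2 = 2 * k + 1 + 1 by omega, pow_succ, mul_comm]
  refine ⟨-B / e, ?_, mul_div_cancel₀ _ he0, ?_⟩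
  · rw [map_div₀, map_neg, hσe]
    field_simp
    linear_combination -he2
  · rw [div_pow, neg_sq, he2]
    field_simp

variable {R : Type*} [CommRing R] [IsDomain R]

theorem sum_quadratic_of_trace_eq [Fintype (fixedSubfield σ)] (hq : Odd q)
    (hK : Fintype.card K = q ^ 2) (hσ : ∀ x, σ x = x ^ q) (ψ : AddChar (fixedSubfield σ) R)
    (hψ : ψ.IsPrimitive) (χ : K → R)
    (hχ : ∀ (z : K) (a : fixedSubfield σ), σ z + z = a → χ z = ψ a) {A B : K} (hB : B ≠ 0)
    (ε : ℤˣ) (hA : σ A + A = 2 * ε * B ^ ((q + 1) / 2)) :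
    ∑ v, χ (A * (σ v * v) + B * v ^ 2) =
      ε * (q * gaussSum ((quadraticChar (fixedSubfield σ)).ringHomComp (Int.castRingHom R)) ψ) := by
  have hinv := involutive_of_card_eq_sq hK hσ
  have hne := ne_id_of_card_eq_sq hK hσ
  have h2 := two_ne_zero_of_card_eq_sq hq hK
  have hcard := card_fixedSubfield hq hK hσ
  obtain ⟨c, hcc, hc, hBc⟩ := exists_mul_map_eq_one_of_trace_eq hq hK hσ hB ε hA
  obtain ⟨y, hy, hσy⟩ := exists_ne_zero_map_eq_neg hinv hne
  obtain ⟨u, hu, hσu⟩ := exists_ne_zero_map_eq_mul hinv hne hcc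
  obtain ⟨d, hd, hsum⟩ := sum_conjTrace_quadratic_eq_card_mul hinv h2 ψ (by rw [hA, mul_assoc])
    hc hBc hu hσu hy hσy
  have h4 : (4 : K) ≠ 0 := by rw [show (4 : K) = 2 * 2 by norm_num]; exact mul_ne_zero h2 h2
  have hd0 : d ≠ 0 := fun h => by simp [h, h4, hB, hu, hy] at hd
  have hηd : quadraticChar _ d = ε := by
    refine quadraticChar_fixedSubfield_eq hq hK hσ hd0 ε ?_
    have hpow : ∀ {x a : K}, x ≠ 0 → σ x = a * x → x ^ (q - 1) = a := fun hx h =>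
      pow_sub_one_eq_of_pow_eq_mul hq.pos.ne' hx (by rw [← hσ, h])
    rw [hd]
    exact pow_sub_one_div_two_eq hq hB
      (by rcases Int.units_eq_one_or ε with rfl | rfl <;> simp) hc (hpow hu hσu)
      (hpow hy (by rw [hσy, neg_one_mul])) (hpow h2 (by rw [map_ofNat, one_mul]))
  simp only [fun z => hχ z _ (coe_conjTrace hinv z).symm]
  rw [hsum, sum_addChar_mul_sq (ringChar_ne_two_of_odd_card (hcard ▸ hq)) hψ hd0, hηd, hcard]
  ring

theorem sum_quadratic_linear_of_trace_eq [Fintype (fixedSubfield σ)] (hq : Odd q)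
    (hK : Fintype.card K = q ^ 2) (hσ : ∀ x, σ x = x ^ q) (ψ : AddChar (fixedSubfield σ) R)
    (hψ : ψ.IsPrimitive) (χ : K → R)
    (hχ : ∀ (z : K) (a : fixedSubfield σ), z ^ q + z = a → χ z = ψ a) {A B C θ : K}
    (hB : B ≠ 0) (hθ : (A ^ q + A) * θ ^ q + 2 * B * θ + C = 0) (ε : ℤˣ)
    (hA : A ^ q + A = 2 * ε * B ^ ((q + 1) / 2)) :
    ∑ w, χ (A * w ^ (q + 1) + B * w ^ 2 + C * w) =
      ε * (q * gaussSum ((quadraticChar (fixedSubfield σ)).ringHomComp (Int.castRingHom R)) ψ *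
        χ (-A * θ ^ (q + 1) - B * θ ^ 2)) := by
  have hinv := involutive_of_card_eq_sq hK hσ
  simp only [← hσ] at hχ hθ hA
  have hχψ : ∀ z, χ z = ψ (conjTrace σ hinv z) := fun z => hχ z _ (coe_conjTrace hinv z).symm
  have hpow : ∀ x : K, x ^ (q + 1) = σ x * x := fun x => by rw [pow_succ, hσ]
  have hsum := sum_quadratic_of_trace_eq hq hK hσ ψ hψ χ hχ hB ε hA
  simp only [hχψ] at hsum
  simp only [hpow, hχψ]
  rw [sum_conjTrace_shift hinv ψ hθ, hsum]
  ring

end Frobenius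

theorem sum_range_pow_add_pow {K : Type*} [Field K] {p : ℕ} [Fact p.Prime] [CharP K p] (n : ℕ)
    (z : K) : ∑ i ∈ range n, (z ^ p ^ n + z) ^ p ^ i = ∑ i ∈ range (2 * n), z ^ p ^ i := by
  rw [two_mul, Finset.sum_range_add, add_comm, ← Finset.sum_add_distrib]
  refine Finset.sum_congr rfl fun i _ => ?_
  rw [add_pow_char_pow, ← pow_mul, ← pow_add]

theorem apply_eq_apply_pow_add {K : Type*} [Field K] [Fintype K] {p : ℕ} [Fact p.Prime]
    [CharP K p] {n : ℕ} (hK : Fintype.card K = p ^ (2 * n)) {M : Type*} [Monoid M] {ζ : M}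
    (χ ψ : K → M)
    (hχ : ∀ x : K, ∀ m : ℕ, (m : K) = ∑ i ∈ range (2 * n), x ^ p ^ i → χ x = ζ ^ m)
    (hψ : ∀ x : K, x ^ p ^ n = x → ∀ m : ℕ, (m : K) = ∑ i ∈ range n, x ^ p ^ i → ψ x = ζ ^ m)
    (z : K) : χ z = ψ (z ^ p ^ n + z) := by
  let := ZMod.algebra K p
  obtain ⟨m, hm⟩ := exists_natCast_eq_sum_pow hK z
  have hfix : (z ^ p ^ n + z) ^ p ^ n = z ^ p ^ n + z := by
    rw [add_pow_char_pow, ← pow_mul, ← pow_add, ← two_mul, ← hK, FiniteField.pow_card, add_comm]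
  rw [hχ z m hm, hψ _ hfix m (by rw [hm, sum_range_pow_add_pow])]

theorem apply_coe_eq_traceChar {K : Type*} [Field K] {F : Subfield K} [Fintype F] {p : ℕ}
    [Fact p.Prime] [Algebra (ZMod p) F] {n : ℕ} (hF : Fintype.card F = p ^ n) {M : Type*}
    [CommMonoid M] {ζ : M} (hζ : ζ ^ p = 1) (ψ : K → M)
    (hψ : ∀ t : F, ∀ m : ℕ, (m : K) = ∑ i ∈ range n, (t : K) ^ p ^ i → ψ t = ζ ^ m) (t : F) :
    ψ t = traceChar hζ t := by
  obtain ⟨m, hm⟩ := exists_natCast_eq_sum_pow hF t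
  rw [traceChar_apply_of_natCast_eq hζ hF hm]
  exact hψ t m (by simpa using congrArg Subtype.val hm)

theorem sum_filter_eq_gaussSum {K : Type*} [Field K] [Fintype K] {q : ℕ} {σ : K →+* K}
    (hσ : ∀ x, σ x = x ^ q) [Fintype (fixedSubfield σ)] {R : Type*} [CommRing R] (η ψ : K → R)
    (ψ' : AddChar (fixedSubfield σ) R) (hψ : ∀ t : fixedSubfield σ, ψ t = ψ' t) (hη0 : η 0 = 0)
    (hη1 : ∀ x : K, x ≠ 0 → (∃ y : K, y ^ q = y ∧ y ^ 2 = x) → η x = 1)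
    (hη2 : ∀ x : K, x ≠ 0 → ¬ (∃ y : K, y ^ q = y ∧ y ^ 2 = x) → η x = -1) :
    ∑ u ∈ univ.filter (fun u : K => u ^ q = u ∧ u ≠ 0), η u * ψ u =
      gaussSum ((quadraticChar (fixedSubfield σ)).ringHomComp (Int.castRingHom R)) ψ' := by
  have hsq : ∀ t : fixedSubfield σ, IsSquare t ↔ ∃ y : K, y ^ q = y ∧ y ^ 2 = t := fun t =>
    ⟨fun ⟨r, hr⟩ => ⟨r, by rw [← hσ]; exact r.2, by rw [hr, sq]; rfl⟩,
      fun ⟨y, hyq, hy⟩ =>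
        ⟨⟨y, by rw [mem_fixedSubfield, hσ, hyq]⟩, Subtype.ext (by simp [← hy, sq])⟩⟩
  have hη : ∀ t : fixedSubfield σ, η t = quadraticChar (fixedSubfield σ) t := fun t => by
    by_cases ht : t = 0
    · simp [ht, hη0]
    have ht' : (t : K) ≠ 0 := by simpa using ht
    by_cases h : IsSquare t
    · rw [(quadraticChar_one_iff_isSquare ht).2 h, hη1 t ht' ((hsq t).1 h), Int.cast_one]
    · rw [quadraticChar_neg_one_iff_not_isSquare.2 h, hη2 t ht' (mt (hsq t).2 h)]
      simp
  rw [← Finset.filter_filter,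
    Finset.sum_filter_of_ne (p := (· ≠ 0)) fun u _ hu h0 => hu (by rw [h0, hη0, zero_mul]),
    Finset.sum_subtype (p := (· ∈ fixedSubfield σ)) _ (fun u => by simp [hσ])]
  exact Fintype.sum_congr _ _ fun t => by rw [hη, hψ]; rfl

theorem stmt2_general (p n q : ℕ) (hp : p.Prime) (hp2 : p ≠ 2)
    (hq : q = p ^ n)
    (K : Type) [Field K] [Fintype K] (hK : Fintype.card K = q ^ 2)
    (ζ : ℂ) (hζ : IsPrimitiveRoot ζ p)
    (χ : K → ℂ)
    (hχ : ∀ x : K, ∀ m : ℕ, (m : K) = ∑ i ∈ Finset.range (2 * n), x ^ p ^ i →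
      χ x = ζ ^ m)
    (ψ : K → ℂ)
    (hψ : ∀ x : K, x ^ q = x → ∀ m : ℕ, (m : K) = ∑ i ∈ Finset.range n, x ^ p ^ i →
      ψ x = ζ ^ m)
    (η : K → ℂ) (hη0 : η 0 = 0)
    (hη1 : ∀ x : K, x ≠ 0 → (∃ y : K, y ^ q = y ∧ y ^ 2 = x) → η x = 1)
    (hη2 : ∀ x : K, x ≠ 0 → ¬ (∃ y : K, y ^ q = y ∧ y ^ 2 = x) → η x = -1)
    (G : ℂ)
    (hG : G = ∑ u ∈ Finset.univ.filter (fun u : K => u ^ q = u ∧ u ≠ 0), η u * ψ u)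
    (A B C : K) (hB : B ≠ 0)
    (θ : K) (hθ : (A ^ q + A) * θ ^ q + 2 * B * θ + C = 0) :
    (A ^ q + A = 2 * B ^ ((q + 1) / 2) →
      ∑ w : K, χ (A * w ^ (q + 1) + B * w ^ 2 + C * w) =
        q * G * χ (-A * θ ^ (q + 1) - B * θ ^ 2)) ∧
    (A ^ q + A = -(2 * B ^ ((q + 1) / 2)) →
      ∑ w : K, χ (A * w ^ (q + 1) + B * w ^ 2 + C * w) =
        -(q * G * χ (-A * θ ^ (q + 1) - B * θ ^ 2))) := by
  subst hq
  have := Fact.mk hp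
  have : CharP K p := charP_of_card_eq_prime_pow (f := 2 * n) (by rw [hK, ← pow_mul, mul_comm])
  have hodd : Odd (p ^ n) := (hp.odd_of_ne_two hp2).pow
  let σ := iterateFrobenius K p n
  have hσ : ∀ x, σ x = x ^ p ^ n := fun x => iterateFrobenius_def p n x
  let := ZMod.algebra (fixedSubfield σ) p
  have hψF : ∀ t : fixedSubfield σ, ψ t = traceChar hζ.pow_eq_one t :=
    apply_coe_eq_traceChar (card_fixedSubfield hodd hK hσ) _ ψ
      fun t m hm => hψ t ((hσ t).symm.trans t.2) m hm
  have hχψ : ∀ (z : K) (a : fixedSubfield σ), z ^ p ^ n + z = a →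
      χ z = traceChar hζ.pow_eq_one a := fun z a h => by
    rw [apply_eq_apply_pow_add (by rw [hK, ← pow_mul, mul_comm]) χ ψ hχ hψ z, h, hψF]
  have key := sum_quadratic_linear_of_trace_eq hodd hK hσ _ (traceChar_isPrimitive hζ) χ hχψ hB hθ
  rw [hG, sum_filter_eq_gaussSum hσ η ψ _ hψF hη0 hη1 hη2]
  refine ⟨fun h => ?_, fun h => ?_⟩
  · simpa using key 1 (by simpa using h)
  · simpa using key (-1) (by rw [h]; push_cast; ring)

/-- Let `A, B, C ∈ F_{q²}` with `B ≠ 0`, and suppose there exists `θ ∈ F_{q²}`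
with `Tr(A)·θ^q + 2Bθ + C = 0`. If `Tr(A) = 2B^{(q+1)/2}`, then
`∑_{w} χ(A·w^{q+1} + B·w² + C·w) = q·G·χ(−A·θ^{q+1} − B·θ²)`; and if
`Tr(A) = −2B^{(q+1)/2}`, then the sum equals `−q·G·χ(−A·θ^{q+1} − B·θ²)`.
Here `K` plays the role of `F_{q²}`, `F_q = {x : K | x^q = x}`, `Tr(x) = x^q + x`,
`χ` is the canonical additive character of `F_{q²}` (via the absolute trace
`∑_{i < 2n} x^(p^i)`), `ψ` the canonical additive character of `F_q` (via the absolute trace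
`∑_{i < n} x^(p^i)` on the subfield), `η` the quadratic character of `F_q` (with `η(0)=0`),
and `G = ∑_{u ∈ F_q^*} η(u)ψ(u)` the quadratic Gauss sum of `F_q`. -/
theorem stmt2 (p n q : ℕ) (hp : p.Prime) (hp2 : p ≠ 2) (hn : 0 < n)
    (hq : q = p ^ n)
    (K : Type) [Field K] [Fintype K] (hK : Fintype.card K = q ^ 2)
    (ζ : ℂ) (hζ : IsPrimitiveRoot ζ p)
    (χ : K → ℂ)
    (hχ : ∀ x : K, ∀ m : ℕ, (m : K) = ∑ i ∈ Finset.range (2 * n), x ^ p ^ i →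
      χ x = ζ ^ m)
    (ψ : K → ℂ)
    (hψ : ∀ x : K, x ^ q = x → ∀ m : ℕ, (m : K) = ∑ i ∈ Finset.range n, x ^ p ^ i →
      ψ x = ζ ^ m)
    (η : K → ℂ) (hη0 : η 0 = 0)
    (hη1 : ∀ x : K, x ≠ 0 → (∃ y : K, y ^ q = y ∧ y ^ 2 = x) → η x = 1)
    (hη2 : ∀ x : K, x ≠ 0 → ¬ (∃ y : K, y ^ q = y ∧ y ^ 2 = x) → η x = -1)
    (G : ℂ)
    (hG : G = ∑ u ∈ Finset.univ.filter (fun u : K => u ^ q = u ∧ u ≠ 0), η u * ψ u)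
    (A B C : K) (hB : B ≠ 0)
    (θ : K) (hθ : (A ^ q + A) * θ ^ q + 2 * B * θ + C = 0) :
    (A ^ q + A = 2 * B ^ ((q + 1) / 2) →
      ∑ w : K, χ (A * w ^ (q + 1) + B * w ^ 2 + C * w) =
        q * G * χ (-A * θ ^ (q + 1) - B * θ ^ 2)) ∧
    (A ^ q + A = -(2 * B ^ ((q + 1) / 2)) →
      ∑ w : K, χ (A * w ^ (q + 1) + B * w ^ 2 + C * w) =
        -(q * G * χ (-A * θ ^ (q + 1) - B * θ ^ 2))) :=
  stmt2_general p n q hp hp2 hq K hK ζ hζ χ hχ ψ hψ η hη0 hη1 hη2 G hG A B C hB θ hθ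
end

section
/- Let a, b, c ∈ F_{q²} with a − b ∉ F_q. Then the number of zeros of x^{q+1} + x² + a·x^q + b·x + c in F_{q²} equals the number of zeros in F_q of the cubic x³ + Tr(b)·x² + (Tr(c) − N(a) + N(b))·x + Tr((b − a)^q·(a² − ab + c)) + Tr(a)·N(b − a). -/
/-!
Write `σ` for the Frobenius `x ↦ x ^ q` of `F_{q²}`, an involution with fixed field `F_q`, so
`Tr x = σ x + x` and `N x = σ x * x`. The quadratic equals `x * (Tr x + b - a) + (a * Tr x + c)`,
so a zero `x` satisfies the linear relation `x * (s + b - a) = -(a * s + c)` with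
`s = Tr x ∈ F_q`, and `s + b - a ≠ 0` because `a - b ∉ F_q`. Conversely, for `s ∈ F_q` this
relation defines `x`, and the relation together with its conjugate forces `Tr x = s` exactly when
`s` is a root of the cubic, which is `(s + b - a) * σ (s + b - a)` times the equation `Tr x = s`
with `x` eliminated. Hence `x ↦ Tr x` is a bijection between the two zero sets. Everything works
for any involutive field endomorphism `σ`.
-/

open Finset
open scoped Classical

section InvolutiveEndomorphism

variable {K : Type*} [Field K] (σ : K →+* K) (a b c : K)

def twistedQuadratic (x : K) : K :=
  σ x * x + x ^ 2 + a * σ x + b * x + c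

def traceCubic (s : K) : K :=
  s ^ 3 + (σ b + b) * s ^ 2 + ((σ c + c) - σ a * a + σ b * b) * s +
    (σ (σ (b - a) * (a ^ 2 - a * b + c)) + σ (b - a) * (a ^ 2 - a * b + c)) +
    (σ a + a) * (σ (b - a) * (b - a))

lemma twistedQuadratic_eq (x : K) :
    twistedQuadratic σ a b c x = x * (σ x + x + b - a) + (a * (σ x + x) + c) := by
  unfold twistedQuadratic; ring

variable {σ}

lemma map_map_add_self (hσ : Function.Involutive σ) (x : K) : σ (σ x + x) = σ x + x := by
  rw [map_add, hσ x, add_comm]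

lemma traceCubic_eq (hσ : Function.Involutive σ) {s : K} (hs : σ s = s) (x : K) :
    traceCubic σ a b c s =
      (x * (s + b - a) + (a * s + c)) * σ (s + b - a) +
        σ (x * (s + b - a) + (a * s + c)) * (s + b - a) +
        (s - (σ x + x)) * (s + b - a) * σ (s + b - a) := by
  unfold traceCubic
  simp only [map_add, map_sub, map_mul, map_pow, hσ _, hs]
  ring

lemma traceCubic_trace_eq_zero (hσ : Function.Involutive σ) {x : K}
    (hx : twistedQuadratic σ a b c x = 0) : traceCubic σ a b c (σ x + x) = 0 := by
  rw [twistedQuadratic_eq] at hx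
  rw [traceCubic_eq a b c hσ (map_map_add_self hσ x) x, hx, map_zero]
  ring

lemma trace_eq_of_traceCubic_eq_zero (hσ : Function.Involutive σ) {s x : K} (hs : σ s = s)
    (hd : s + b - a ≠ 0) (hx : x * (s + b - a) + (a * s + c) = 0)
    (hE : traceCubic σ a b c s = 0) : σ x + x = s := by
  have h := traceCubic_eq a b c hσ hs x
  rw [hE, hx, map_zero] at h
  have hprod : (s - (σ x + x)) * ((s + b - a) * σ (s + b - a)) = 0 := by linear_combination -h
  have hne : (s + b - a) * σ (s + b - a) ≠ 0 := mul_ne_zero hd ((map_ne_zero σ).mpr hd)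
  exact (sub_eq_zero.mp ((mul_eq_zero.mp hprod).resolve_right hne)).symm

theorem card_twistedQuadratic_roots_eq_card_traceCubic_fixed_roots [Fintype K]
    (hσ : Function.Involutive σ) (hab : σ (a - b) ≠ a - b) :
    #(univ.filter fun x => twistedQuadratic σ a b c x = 0) =
      #(univ.filter fun s => σ s = s ∧ traceCubic σ a b c s = 0) := by
  have hd : ∀ s, σ s = s → s + b - a ≠ 0 := fun s hs h =>
    hab (by rw [show a - b = s by linear_combination -h, hs])
  have hlin : ∀ s, s + b - a ≠ 0 → -(a * s + c) / (s + b - a) * (s + b - a) + (a * s + c) = 0 :=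
    fun s hs => by rw [div_mul_cancel₀ _ hs]; ring
  apply card_nbij' (fun x => σ x + x) (fun s => -(a * s + c) / (s + b - a))
  · intro x hx
    simp only [coe_filter, mem_univ, true_and, Set.mem_ofPred_eq] at hx ⊢
    exact ⟨map_map_add_self hσ x, traceCubic_trace_eq_zero a b c hσ hx⟩
  · intro s hs
    simp only [coe_filter, mem_univ, true_and, Set.mem_ofPred_eq] at hs ⊢
    obtain ⟨hs, hE⟩ := hs
    have htr := trace_eq_of_traceCubic_eq_zero a b c hσ hs (hd s hs) (hlin s (hd s hs)) hE
    rw [twistedQuadratic_eq, htr, hlin s (hd s hs)]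
  · intro x hx
    simp only [coe_filter, mem_univ, true_and, Set.mem_ofPred_eq, twistedQuadratic_eq] at hx
    rw [div_eq_iff (hd _ (map_map_add_self hσ x))]
    linear_combination -hx
  · intro s hs
    simp only [coe_filter, mem_univ, true_and, Set.mem_ofPred_eq] at hs
    exact trace_eq_of_traceCubic_eq_zero a b c hσ hs.1 (hd s hs.1) (hlin s (hd s hs.1)) hs.2

end InvolutiveEndomorphism

theorem stmt10_general (p n q : ℕ) (hp : p.Prime) (hq : q = p ^ n)
    (K : Type) [Field K] [Fintype K] (hK : Fintype.card K = q ^ 2)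
    (a b c : K) (hab : (a - b) ^ q ≠ a - b) :
    (Finset.univ.filter
        (fun x : K => x ^ (q + 1) + x ^ 2 + a * x ^ q + b * x + c = 0)).card =
      (Finset.univ.filter
        (fun x : K => x ^ q = x ∧
          x ^ 3 + (b ^ q + b) * x ^ 2 +
            ((c ^ q + c) - a ^ (q + 1) + b ^ (q + 1)) * x +
            (((b - a) ^ q * (a ^ 2 - a * b + c)) ^ q +
              (b - a) ^ q * (a ^ 2 - a * b + c)) +
            (a ^ q + a) * (b - a) ^ (q + 1) = 0)).card := by
  subst hq
  have := Fact.mk hp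
  have : CharP K p := charP_of_card_eq_prime_pow (hK.trans (pow_mul p n 2).symm)
  have hσ : Function.Involutive (iterateFrobenius K p n) := fun x => by
    rw [iterateFrobenius_def, iterateFrobenius_def, ← pow_mul, ← sq, ← hK, FiniteField.pow_card]
  have h := card_twistedQuadratic_roots_eq_card_traceCubic_fixed_roots a b c hσ
    (by rwa [iterateFrobenius_def])
  simp only [twistedQuadratic, traceCubic, iterateFrobenius_def] at h
  simp only [pow_succ _ (p ^ n)]
  exact h

/-- Let `q` be any prime power and `a, b, c ∈ F_{q²}` with `a − b ∉ F_q`.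
Then the number of zeros of `x^{q+1} + x² + a·x^q + b·x + c` in `F_{q²}` equals the number
of zeros in `F_q` of
`x³ + Tr(b)·x² + (Tr(c) − N(a) + N(b))·x + Tr((b−a)^q·(a²−ab+c)) + Tr(a)·N(b−a)`.
Here `K` plays the role of `F_{q²}`, `F_q = {x : K | x^q = x}`, `Tr(x) = x^q + x` and
`N(x) = x^{q+1}`. -/
theorem stmt10 (p n q : ℕ) (hp : p.Prime) (hn : 0 < n) (hq : q = p ^ n)
    (K : Type) [Field K] [Fintype K] (hK : Fintype.card K = q ^ 2)
    (a b c : K) (hab : (a - b) ^ q ≠ a - b) :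
    (Finset.univ.filter
        (fun x : K => x ^ (q + 1) + x ^ 2 + a * x ^ q + b * x + c = 0)).card =
      (Finset.univ.filter
        (fun x : K => x ^ q = x ∧
          x ^ 3 + (b ^ q + b) * x ^ 2 +
            ((c ^ q + c) - a ^ (q + 1) + b ^ (q + 1)) * x +
            (((b - a) ^ q * (a ^ 2 - a * b + c)) ^ q +
              (b - a) ^ q * (a ^ 2 - a * b + c)) +
            (a ^ q + a) * (b - a) ^ (q + 1) = 0)).card :=
  stmt10_general p n q hp hq K hK a b c hab
end

section
/- Let a, b, c ∈ F_{q²} with a − b ∈ F_q and Tr(a² − ab + c) = 0. Then the number of zeros of x^{q+1} + x² + a·x^q + b·x + c in F_{q²} is: 1 if a² − ab + c ≠ 0 and a^q + 2a − b ≠ 0; 0 if a² − ab + c ≠ 0 and a^q + 2a − b = 0; q + 1 if a² − ab + c = 0 and a^q + 2a − b ≠ 0; and q if a² − ab + c = 0 and a^q + 2a − b = 0. -/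
/-!
Put `Tr y = y ^ q + y`, `e = a ^ q + 2a - b` and `γ = a² - ab + c`. Substituting `y = x + a`
turns the polynomial into `y (Tr y - e) + γ`, where `e ∈ F_q` (as `e = Tr a + (a - b)`) and
`γ ^ q = -γ`. If `y (Tr y - e) = -γ`, applying Frobenius gives `y ^ q (Tr y - e) = γ`, and
adding the two shows `Tr y · (Tr y - e) = 0`. So for `γ ≠ 0` the zeros are the `y` with
`Tr y = 0` and `e y = γ`: the single point `γ / e` if `e ≠ 0`, none if `e = 0`. For `γ = 0` the
zeros are `0` together with the fibre `Tr⁻¹ e`, which has `q` elements: `Tr` is additive with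
image in `F_q` and kernel of size at most `q` (both bounds by degree), and
`|image| · |kernel| = q²` forces equality in both.
-/

open Finset
open scoped Classical

open Polynomial in
theorem card_filter_pow_add_mul_eq_le {R : Type*} [CommRing R] [IsDomain R] [Fintype R] {q : ℕ}
    (hq : 1 < q) (v w : R) : #{y : R | y ^ q + v * y = w} ≤ q := by
  set P : R[X] := X ^ q + (C v * X + C (-w))
  have hP : P.natDegree = q := by
    rw [natDegree_add_eq_left_of_natDegree_lt] <;>
      simp only [natDegree_X_pow, natDegree_linear_le.trans_lt hq]
  have hP0 : P ≠ 0 := fun h ↦ by simp [h] at hP; omega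
  refine (card_le_degree_of_subset_roots fun y hy ↦ ?_).trans hP.le
  simp only [mem_val, mem_filter, mem_univ, true_and] at hy
  rw [mem_roots hP0]
  simp [P, ← add_assoc, hy]

theorem pow_pow_eq_self_of_card_eq_sq {G : Type*} [GroupWithZero G] [Fintype G] {q : ℕ}
    (hG : Fintype.card G = q ^ 2) (x : G) : (x ^ q) ^ q = x := by
  rw [← pow_mul, ← sq, ← hG, FiniteField.pow_card]

theorem one_lt_of_card_eq_sq {α : Type*} [Fintype α] [Nontrivial α] {q : ℕ}
    (hα : Fintype.card α = q ^ 2) : 1 < q := by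
  have := hα ▸ Fintype.one_lt_card (α := α)
  nlinarith

theorem eq_and_eq_of_mul_eq_sq {a b q : ℕ} (h : a * b = q ^ 2) (ha : a ≤ q) (hb : b ≤ q) :
    a = q ∧ b = q := by
  constructor <;> nlinarith

def frobeniusTrace (K : Type*) [CommRing K] (p n : ℕ) [ExpChar K p] : K →+ K :=
  (iterateFrobenius K p n).toAddMonoidHom + AddMonoidHom.id K

@[simp]
theorem frobeniusTrace_apply {K : Type*} [CommRing K] {p n : ℕ} [ExpChar K p] (y : K) :
    frobeniusTrace K p n y = y ^ p ^ n + y := rfl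

section FrobeniusTrace

variable {K : Type*} [Field K] [Fintype K] {p n : ℕ} [ExpChar K p]

theorem frobeniusTrace_pow (hK : Fintype.card K = (p ^ n) ^ 2) (y : K) :
    frobeniusTrace K p n y ^ p ^ n = frobeniusTrace K p n y := by
  rw [frobeniusTrace_apply, add_pow_expChar_pow, pow_pow_eq_self_of_card_eq_sq hK, add_comm]

theorem card_filter_frobeniusTrace_eq (hK : Fintype.card K = (p ^ n) ^ 2) {t : K}
    (ht : t ^ p ^ n = t) : #{y | frobeniusTrace K p n y = t} = p ^ n := by
  set T := frobeniusTrace K p n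
  have hq := one_lt_of_card_eq_sq hK
  have hfiber : ∀ s ∈ univ.image T, #{y | T y = s} = #{y | T y = 0} := fun s hs ↦
    AddMonoidHom.card_fiber_eq_of_mem_range T (by simpa using hs) ⟨0, map_zero T⟩
  have himage : univ.image T ⊆ filter (fun s ↦ s ^ p ^ n = s) univ := by
    simpa [T, subset_iff] using frobeniusTrace_pow hK
  have hfix : #{s : K | s ^ p ^ n = s} ≤ p ^ n := by
    simpa [← sub_eq_add_neg, sub_eq_zero] using card_filter_pow_add_mul_eq_le hq (-1 : K) 0
  have hker : #{y | T y = 0} ≤ p ^ n := by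
    convert card_filter_pow_add_mul_eq_le hq (1 : K) 0 using 4
    simp [T]
  have hsum : #(univ.image T) * #{y | T y = 0} = (p ^ n) ^ 2 := by
    rw [← hK, ← card_univ, card_eq_sum_card_image T univ, ← smul_eq_mul, ← sum_const]
    exact sum_congr rfl fun s hs ↦ (hfiber s hs).symm
  obtain ⟨himage_card, hker_card⟩ :=
    eq_and_eq_of_mul_eq_sq hsum ((card_le_card himage).trans hfix) hker
  have ht_mem : t ∈ univ.image T := by
    rw [eq_of_subset_of_card_le himage (hfix.trans himage_card.ge)]
    simpa using ht
  rw [hfiber t ht_mem, hker_card]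

theorem mul_frobeniusTrace_sub_add_eq_zero_iff (hK : Fintype.card K = (p ^ n) ^ 2) {e γ : K}
    (he : e ^ p ^ n = e) (hγ : γ ^ p ^ n = -γ) (hγ0 : γ ≠ 0) {y : K} :
    y * (frobeniusTrace K p n y - e) + γ = 0 ↔ frobeniusTrace K p n y = 0 ∧ e * y = γ := by
  refine ⟨fun h ↦ ?_, fun ⟨hy, hey⟩ ↦ by rw [hy]; linear_combination -hey⟩
  set s := frobeniusTrace K p n y - e with hs_def
  have hs : s ^ p ^ n = s := by rw [sub_pow_expChar_pow, frobeniusTrace_pow hK, he]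
  have h1 : y * s = -γ := by linear_combination h
  have h2 : y ^ p ^ n * s = γ := by
    rw [← hs, ← mul_pow, h1, neg_pow, neg_one_pow_expChar_pow, hγ]
    ring
  have hs0 : s ≠ 0 := fun h0 ↦ hγ0 (by simpa [h0] using h1)
  have hy : frobeniusTrace K p n y = 0 := by
    refine (mul_eq_zero.1 ?_).resolve_right hs0
    rw [frobeniusTrace_apply]
    linear_combination h2 + h1
  refine ⟨hy, ?_⟩
  rw [hs_def, hy] at h1
  linear_combination -h1

theorem card_zeros_of_ne_zero_of_ne_zero (hK : Fintype.card K = (p ^ n) ^ 2) {e γ : K}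
    (he : e ^ p ^ n = e) (hγ : γ ^ p ^ n = -γ) (hγ0 : γ ≠ 0) (he0 : e ≠ 0) :
    #{y | y * (frobeniusTrace K p n y - e) + γ = 0} = 1 := by
  rw [card_eq_one]
  refine ⟨γ / e, ?_⟩
  ext y
  simp only [mem_filter, mem_univ, true_and, mem_singleton,
    mul_frobeniusTrace_sub_add_eq_zero_iff hK he hγ hγ0]
  refine ⟨fun ⟨_, hy⟩ ↦ by rw [← hy, mul_div_cancel_left₀ y he0], ?_⟩
  rintro rfl
  refine ⟨?_, mul_div_cancel₀ γ he0⟩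
  rw [frobeniusTrace_apply, div_pow, hγ, he]
  ring

theorem card_zeros_of_ne_zero_of_eq_zero (hK : Fintype.card K = (p ^ n) ^ 2) {γ : K}
    (hγ : γ ^ p ^ n = -γ) (hγ0 : γ ≠ 0) :
    #{y | y * (frobeniusTrace K p n y - 0) + γ = 0} = 0 := by
  rw [card_eq_zero, filter_eq_empty_iff]
  intro y _
  rw [mul_frobeniusTrace_sub_add_eq_zero_iff hK (zero_pow (expChar_pow_pos K p n).ne') hγ hγ0,
    zero_mul]
  exact fun h ↦ hγ0 h.2.symm

theorem filter_mul_frobeniusTrace_sub_eq_zero (e : K) :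
    filter (fun y ↦ y * (frobeniusTrace K p n y - e) + 0 = 0) univ =
      insert 0 (filter (fun y ↦ frobeniusTrace K p n y = e) univ) := by
  ext y
  simp only [mem_filter, mem_univ, true_and, mem_insert, add_zero, mul_eq_zero, sub_eq_zero]

theorem card_zeros_of_eq_zero_of_ne_zero (hK : Fintype.card K = (p ^ n) ^ 2) {e : K}
    (he : e ^ p ^ n = e) (he0 : e ≠ 0) :
    #{y | y * (frobeniusTrace K p n y - e) + 0 = 0} = p ^ n + 1 := by
  rw [filter_mul_frobeniusTrace_sub_eq_zero,
    card_insert_of_notMem (by simpa [-frobeniusTrace_apply] using he0.symm),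
    card_filter_frobeniusTrace_eq hK he]

theorem card_zeros_of_eq_zero_of_eq_zero (hK : Fintype.card K = (p ^ n) ^ 2) :
    #{y | y * (frobeniusTrace K p n y - 0) + 0 = 0} = p ^ n := by
  rw [filter_mul_frobeniusTrace_sub_eq_zero, insert_eq_of_mem (by simp [-frobeniusTrace_apply]),
    card_filter_frobeniusTrace_eq hK (zero_pow (expChar_pow_pos K p n).ne')]

end FrobeniusTrace

theorem card_filter_add_right {G : Type*} [AddGroup G] [Fintype G] (P : G → Prop) (a : G) :
    #{x | P (x + a)} = #{x | P x} := by
  conv_rhs => rw [← map_univ_equiv (Equiv.addRight a), filter_map, card_map]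
  rfl

theorem pow_succ_add_sq_add_eq {K : Type*} [CommRing K] {p n : ℕ} [ExpChar K p] (a b c x : K) :
    x ^ (p ^ n + 1) + x ^ 2 + a * x ^ p ^ n + b * x + c =
      (x + a) * (frobeniusTrace K p n (x + a) - (a ^ p ^ n + 2 * a - b)) + (a ^ 2 - a * b + c) := by
  rw [frobeniusTrace_apply, add_pow_expChar_pow]
  ring

theorem card_filter_pow_succ_add_sq_add_eq {K : Type*} [CommRing K] [Fintype K] {p n : ℕ}
    [ExpChar K p] (a b c : K) :
    #{x : K | x ^ (p ^ n + 1) + x ^ 2 + a * x ^ p ^ n + b * x + c = 0} =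
      #{y | y * (frobeniusTrace K p n y - (a ^ p ^ n + 2 * a - b)) + (a ^ 2 - a * b + c) = 0} := by
  simp_rw [pow_succ_add_sq_add_eq a b c]
  exact card_filter_add_right
    (fun y ↦ y * (frobeniusTrace K p n y - (a ^ p ^ n + 2 * a - b)) + (a ^ 2 - a * b + c) = 0) a

theorem stmt12_general (p n q : ℕ) (hp : p.Prime) (hq : q = p ^ n)
    (K : Type) [Field K] [Fintype K] (hK : Fintype.card K = q ^ 2)
    (a b c : K) (hab : (a - b) ^ q = a - b)
    (hγtr : (a ^ 2 - a * b + c) ^ q + (a ^ 2 - a * b + c) = 0)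
    (Z : ℕ)
    (hZ : Z = (Finset.univ.filter
      (fun x : K => x ^ (q + 1) + x ^ 2 + a * x ^ q + b * x + c = 0)).card) :
    (a ^ 2 - a * b + c ≠ 0 → a ^ q + 2 * a - b ≠ 0 → Z = 1) ∧
    (a ^ 2 - a * b + c ≠ 0 → a ^ q + 2 * a - b = 0 → Z = 0) ∧
    (a ^ 2 - a * b + c = 0 → a ^ q + 2 * a - b ≠ 0 → Z = q + 1) ∧
    (a ^ 2 - a * b + c = 0 → a ^ q + 2 * a - b = 0 → Z = q) := by
  subst hq hZ
  have : Fact p.Prime := ⟨hp⟩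
  have : CharP K p := charP_of_card_eq_prime_pow (hK.trans (pow_mul p n 2).symm)
  have : ExpChar K p := .prime hp
  rw [card_filter_pow_succ_add_sq_add_eq]
  set γ := a ^ 2 - a * b + c
  set e := a ^ p ^ n + 2 * a - b
  have he : e ^ p ^ n = e := by
    have he_trace : e = frobeniusTrace K p n a + (a - b) := by
      rw [frobeniusTrace_apply]
      ring
    rw [he_trace, add_pow_expChar_pow, frobeniusTrace_pow hK, hab]
  have hγ : γ ^ p ^ n = -γ := eq_neg_of_add_eq_zero_left hγtr
  refine ⟨card_zeros_of_ne_zero_of_ne_zero hK he hγ, fun hγ0 he0 ↦ ?_, fun hγ0 he0 ↦ ?_,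
    fun hγ0 he0 ↦ ?_⟩
  · rw [he0]
    exact card_zeros_of_ne_zero_of_eq_zero hK hγ hγ0
  · rw [hγ0]
    exact card_zeros_of_eq_zero_of_ne_zero hK he he0
  · rw [hγ0, he0]
    exact card_zeros_of_eq_zero_of_eq_zero hK

/-- Let `q` be any prime power and `a, b, c ∈ F_{q²}` with `a − b ∈ F_q` and
`Tr(a² − ab + c) = 0`. Then the number of zeros of `x^{q+1} + x² + a·x^q + b·x + c` in
`F_{q²}` is: `1` if `a² − ab + c ≠ 0` and `a^q + 2a − b ≠ 0`; `0` if `a² − ab + c ≠ 0` and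
`a^q + 2a − b = 0`; `q + 1` if `a² − ab + c = 0` and `a^q + 2a − b ≠ 0`; and `q` if
`a² − ab + c = 0` and `a^q + 2a − b = 0`.
Here `K` plays the role of `F_{q²}`, `F_q = {x : K | x^q = x}` and `Tr(x) = x^q + x`. -/
theorem stmt12 (p n q : ℕ) (hp : p.Prime) (hn : 0 < n) (hq : q = p ^ n)
    (K : Type) [Field K] [Fintype K] (hK : Fintype.card K = q ^ 2)
    (a b c : K) (hab : (a - b) ^ q = a - b)
    (hγtr : (a ^ 2 - a * b + c) ^ q + (a ^ 2 - a * b + c) = 0)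
    (Z : ℕ)
    (hZ : Z = (Finset.univ.filter
      (fun x : K => x ^ (q + 1) + x ^ 2 + a * x ^ q + b * x + c = 0)).card) :
    (a ^ 2 - a * b + c ≠ 0 → a ^ q + 2 * a - b ≠ 0 → Z = 1) ∧
    (a ^ 2 - a * b + c ≠ 0 → a ^ q + 2 * a - b = 0 → Z = 0) ∧
    (a ^ 2 - a * b + c = 0 → a ^ q + 2 * a - b ≠ 0 → Z = q + 1) ∧
    (a ^ 2 - a * b + c = 0 → a ^ q + 2 * a - b = 0 → Z = q) :=
  stmt12_general p n q hp hq K hK a b c hab hγtr Z hZ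
end
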